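/- Continuity at the endpoints under the strictly positive gap condition. If (hf, hg) ∈ 𝒳² satisfies the strictly positive gap condition, then hf and hg are continuous at 0 and at 1; that is, hf(0+) = 0, hg(0+) = 0, hf(1−) = 1, and hg(1−) = 1. -/

import Mathlib

open MeasureTheory Filter Set

noncomputable section

/-- Convolution `(f ⊗ ω)(x) = ∫ y, f y · ω (x − y)`. -/
def conv (f ω : ℝ → ℝ) (x : ℝ) : ℝ := ∫ y : ℝ, f y * ω (x - y)

/-- `ω` is an averaging kernel: even, nonnegative, of bounded variation, integrating to 1. -/
def IsAveragingKernel (ω : ℝ → ℝ) : Prop :=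
  (∀ x, ω (-x) = ω x) ∧ (∀ x, 0 ≤ ω x) ∧ BoundedVariationOn ω Set.univ ∧
    MeasureTheory.Integrable ω ∧ (∫ x : ℝ, ω x) = 1

/-- The essential supremum `‖ω‖∞` of a kernel, as a real number. -/
def kerSup (ω : ℝ → ℝ) : ℝ := (eLpNorm ω ⊤ MeasureTheory.volume).toReal

/-- `ω` is regular: for some `W ∈ (0,∞]`, it vanishes outside `[−W, W]` and is
positive on `(−W, W)` (the case `W = ∞` being that `ω` is everywhere positive). -/
def IsRegularKernel (ω : ℝ → ℝ) : Prop :=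
  (∀ x, 0 < ω x) ∨
    ∃ W : ℝ, 0 < W ∧ (∀ x, W < |x| → ω x = 0) ∧ (∀ x, |x| < W → 0 < ω x)

/-- Membership in `𝒳`: nondecreasing self-maps of `[0,1]`. -/
def MemX (h : ℝ → ℝ) : Prop :=
  MonotoneOn h (Icc 0 1) ∧ MapsTo h (Icc 0 1) (Icc 0 1)

/-- Left limit `h(u−)` of `h ∈ 𝒳` at `u ∈ [0,1]`, with the convention `h(0−) = 0`. -/
def lm (h : ℝ → ℝ) (u : ℝ) : ℝ := if u ≤ 0 then 0 else sSup (h '' Ico 0 u)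

/-- Right limit `h(u+)` of `h ∈ 𝒳` at `u ∈ [0,1]`, with the convention `h(1+) = 1`. -/
def rm (h : ℝ → ℝ) (u : ℝ) : ℝ := if 1 ≤ u then 1 else sInf (h '' Ioc u 1)

/-- A canonical generalized inverse of `h ∈ 𝒳` (any valid inverse has the same integrals,
so the potential below is unambiguous). -/
def Xinv (h : ℝ → ℝ) (v : ℝ) : ℝ := sInf ({1} ∪ {u ∈ Icc (0:ℝ) 1 | v ≤ h u})

/-- The potential `Φ(hf, hg; u, v) = ∫₀ᵘ hg⁻¹ + ∫₀ᵛ hf⁻¹ − u·v`. -/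
def Pot (hf hg : ℝ → ℝ) (u v : ℝ) : ℝ :=
  (∫ x in (0:ℝ)..u, Xinv hg x) + (∫ x in (0:ℝ)..v, Xinv hf x) - u * v

/-- `A(hf, hg) = Φ(hf, hg; 1, 1)`. -/
def Agap (hf hg : ℝ → ℝ) : ℝ := Pot hf hg 1 1

/-- `(u,v)` is a crossing point of `(hf, hg)`:
`u ∈ [hg(v−), hg(v+)]` and `v ∈ [hf(u−), hf(u+)]`. -/
def IsCrossing (hf hg : ℝ → ℝ) (u v : ℝ) : Prop :=
  u ∈ Icc (0:ℝ) 1 ∧ v ∈ Icc (0:ℝ) 1 ∧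
    u ∈ Icc (lm hg v) (rm hg v) ∧ v ∈ Icc (lm hf u) (rm hf u)

/-- The strictly positive gap condition: there is a nontrivial crossing point, and every
nontrivial crossing point satisfies `Φ(hf, hg; u, v) > max {0, A(hf, hg)}`. -/
def StrictPosGap (hf hg : ℝ → ℝ) : Prop :=
  (∃ u v, IsCrossing hf hg u v ∧ ¬(u = 0 ∧ v = 0) ∧ ¬(u = 1 ∧ v = 1)) ∧
    ∀ u v, IsCrossing hf hg u v → ¬(u = 0 ∧ v = 0) → ¬(u = 1 ∧ v = 1) →
      max 0 (Agap hf hg) < Pot hf hg u v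

/-- Membership in `Ψ`: nondecreasing functions `ℝ → [0,1]`. -/
def MemPsi (f : ℝ → ℝ) : Prop := Monotone f ∧ ∀ x, f x ∈ Icc (0:ℝ) 1

/-- `f` is `(a,b)`-interpolating: limits `a` at `−∞` and `b` at `+∞`. -/
def Interpolates (f : ℝ → ℝ) (a b : ℝ) : Prop :=
  Filter.Tendsto f Filter.atBot (nhds a) ∧ Filter.Tendsto f Filter.atTop (nhds b)

/-!
Swapping `hf` and `hg`, and reflecting `h ↦ 1 - h (1 - ·)` (which maps crossing points to crossing
points and shifts the potential by `-A`), preserve the strictly positive gap condition, so it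
suffices to prove `hf(0+) = 0`. If `a = hf(0+) > 0`, then `hf⁻¹ = 0` on `(0, a)`, so `hf⁻¹ ≤ hg`
holds on a maximal interval `(0, s)` with `s ≥ a`. Either `s = 1`, or `(hg(s−), s)` is a nontrivial
crossing point. Either way there is a nontrivial crossing point `(u, v)` with `hf⁻¹ ≤ hg` on
`(0, v)`, and there `Φ(u, v) ≤ ∫₀ᵘ hg⁻¹ + ∫₀ᵛ hg - uv ≤ 0` by the equality case of Young's
inequality, contradicting the gap condition.
-/

section Xinv

variable {h : ℝ → ℝ} {v t : ℝ}

lemma zero_mem_lowerBounds_Xinv_set :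
    (0 : ℝ) ∈ lowerBounds ({1} ∪ {u ∈ Icc (0:ℝ) 1 | v ≤ h u}) := by
  rintro x (rfl | hx)
  exacts [zero_le_one, hx.1.1]

lemma Xinv_nonneg : 0 ≤ Xinv h v :=
  le_csInf ⟨1, Or.inl rfl⟩ zero_mem_lowerBounds_Xinv_set

lemma Xinv_le (ht : t ∈ Icc (0:ℝ) 1) (hvt : v ≤ h t) : Xinv h v ≤ t :=
  csInf_le ⟨0, zero_mem_lowerBounds_Xinv_set⟩ (Or.inr ⟨ht, hvt⟩)

lemma Xinv_le_one : Xinv h v ≤ 1 :=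
  csInf_le ⟨0, zero_mem_lowerBounds_Xinv_set⟩ (Or.inl rfl)

lemma Xinv_mono : Monotone (Xinv h) := fun _ _ hab =>
  csInf_le_csInf ⟨0, zero_mem_lowerBounds_Xinv_set⟩ ⟨1, Or.inl rfl⟩ <|
    union_subset_union_right _ fun _ hu => ⟨hu.1, hab.trans hu.2⟩

lemma lt_of_lt_Xinv (ht : t ∈ Icc (0:ℝ) 1) (hlt : t < Xinv h v) : h t < v :=
  lt_of_not_ge fun hvt => (Xinv_le ht hvt).not_gt hlt

lemma le_of_Xinv_lt (hh : MemX h) (ht : t ∈ Icc (0:ℝ) 1) (hlt : Xinv h v < t) : v ≤ h t := by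
  rw [Xinv] at hlt
  obtain ⟨s, rfl | hs, hst⟩ := exists_lt_of_csInf_lt (singleton_nonempty _).inl hlt
  · exact absurd ht.2 hst.not_ge
  · exact hs.2.trans (hh.1 hs.1 ht hst.le)

end Xinv

lemma MemX.intervalIntegrable {h : ℝ → ℝ} (hh : MemX h) {v : ℝ} (hv : v ∈ Icc (0:ℝ) 1) :
    IntervalIntegrable h volume 0 v :=
  (hh.1.mono (by rw [uIcc_of_le hv.1]; exact Icc_subset_Icc_right hv.2)).intervalIntegrable

section OneSidedLimits

variable {h : ℝ → ℝ} {u v t : ℝ}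

lemma le_lm (hh : MemX h) (hv : v ≤ 1) (ht : t ∈ Ico (0:ℝ) v) : h t ≤ lm h v := by
  rw [lm, if_neg (ht.1.trans_lt ht.2).not_ge]
  exact le_csSup ⟨1, forall_mem_image.2 fun y hy => (hh.2 ⟨hy.1, hy.2.le.trans hv⟩).2⟩
    (mem_image_of_mem h ht)

lemma exists_lt_of_lt_lm (hv : 0 < v) (ht : t < lm h v) : ∃ y ∈ Ico (0:ℝ) v, t < h y := by
  rw [lm, if_neg hv.not_ge] at ht
  obtain ⟨_, ⟨y, hy, rfl⟩, hty⟩ := exists_lt_of_lt_csSup ((nonempty_Ico.2 hv).image h) ht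
  exact ⟨y, hy, hty⟩

lemma lm_le_of_forall_le (hv : 0 ≤ v) (H : ∀ t ∈ Ico (0:ℝ) u, h t ≤ v) : lm h u ≤ v := by
  unfold lm
  split_ifs with hu
  · exact hv
  · exact csSup_le ((nonempty_Ico.2 (not_le.1 hu)).image h) (forall_mem_image.2 H)

lemma rm_le (hh : MemX h) (hv : 0 ≤ v) (ht : t ∈ Ioc v 1) : rm h v ≤ h t := by
  rw [rm, if_neg (ht.1.trans_le ht.2).not_ge]
  exact csInf_le ⟨0, forall_mem_image.2 fun y hy => (hh.2 ⟨hv.trans hy.1.le, hy.2⟩).1⟩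
    (mem_image_of_mem h ht)

lemma le_rm_of_forall_le (hu : u ≤ 1) (H : ∀ t ∈ Ioc v 1, u ≤ h t) : u ≤ rm h v := by
  unfold rm
  split_ifs with hv
  · exact hu
  · exact le_csInf ((nonempty_Ioc.2 (not_le.1 hv)).image h) (forall_mem_image.2 H)

lemma lm_nonneg (hh : MemX h) (hv : v ≤ 1) : 0 ≤ lm h v := by
  rcases le_or_gt v 0 with hv0 | hv0
  · rw [lm, if_pos hv0]
  · exact (hh.2 ⟨le_rfl, zero_le_one⟩).1.trans (le_lm hh hv ⟨le_rfl, hv0⟩)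

lemma lm_le_one (hh : MemX h) (hv : v ≤ 1) : lm h v ≤ 1 :=
  lm_le_of_forall_le zero_le_one fun _ ht => (hh.2 ⟨ht.1, ht.2.le.trans hv⟩).2

lemma rm_nonneg (hh : MemX h) (hv : 0 ≤ v) : 0 ≤ rm h v :=
  le_rm_of_forall_le zero_le_one fun _ ht => (hh.2 ⟨hv.trans ht.1.le, ht.2⟩).1

lemma lm_le_rm (hh : MemX h) (hv : v ∈ Icc (0:ℝ) 1) : lm h v ≤ rm h v :=
  le_rm_of_forall_le (lm_le_one hh hv.2) fun _ ht =>
    lm_le_of_forall_le (hh.2 ⟨hv.1.trans ht.1.le, ht.2⟩).1 fun _ hs =>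
      hh.1 ⟨hs.1, hs.2.le.trans hv.2⟩ ⟨hv.1.trans ht.1.le, ht.2⟩ (hs.2.trans ht.1).le

lemma Xinv_le_of_le_rm (hh : MemX h) (hv : v ∈ Icc (0:ℝ) 1) (hu : u ≤ rm h v) :
    Xinv h u ≤ v := by
  refine le_of_forall_gt_imp_ge_of_dense fun c hc => ?_
  rcases le_or_gt 1 c with hc1 | hc1
  · exact Xinv_le_one.trans hc1
  · exact Xinv_le ⟨hv.1.trans hc.le, hc1.le⟩ (hu.trans (rm_le hh hv.1 ⟨hc, hc1.le⟩))

lemma le_rm_of_forall_Xinv_le (hh : MemX h) (hu : 0 ≤ u) (hv : v ≤ 1)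
    (H : ∀ y ∈ Ioo (0:ℝ) v, Xinv h y ≤ u) : v ≤ rm h u :=
  le_rm_of_forall_le hv fun t ht => le_of_forall_lt_imp_le_of_dense fun y hy => by
    have ht' : t ∈ Icc (0:ℝ) 1 := ⟨hu.trans ht.1.le, ht.2⟩
    rcases le_or_gt y 0 with hy0 | hy0
    · exact hy0.trans (hh.2 ht').1
    · exact le_of_Xinv_lt hh ht' ((H y ⟨hy0, hy⟩).trans_lt ht.1)

end OneSidedLimits

theorem integral_Xinv_add_integral_le_mul {h : ℝ → ℝ} {u v : ℝ} (hh : MemX h)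
    (hu : u ∈ Icc (0:ℝ) 1) (hv : v ∈ Icc (0:ℝ) 1) (hlm : lm h v ≤ u) (hrm : u ≤ rm h v) :
    (∫ x in (0:ℝ)..u, Xinv h x) + ∫ y in (0:ℝ)..v, h y ≤ u * v := by
  have hXinv : IntegrableOn (Xinv h) (Ioo 0 u) :=
    (Xinv_mono.intervalIntegrable (a := 0) (b := u)).1.mono_set Ioo_subset_Ioc_self
  have hint : IntegrableOn h (Ioo 0 v) := (hh.intervalIntegrable hv).1.mono_set Ioo_subset_Ioc_self
  have hconst : IntegrableOn (fun _ => u) (Ioo (0:ℝ) v) := integrableOn_const measure_Ioo_lt_top.ne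
  have hbelow : ∀ y ∈ Ioo (0:ℝ) v, h y ≤ u := fun y hy =>
    (le_lm hh hv.2 ⟨hy.1.le, hy.2⟩).trans hlm
  -- the region under `Xinv h` over `(0, u)`, mirrored in the diagonal, lies between `h` and `u`
  have hsub : Prod.swap ⁻¹' regionBetween (fun _ => 0) (Xinv h) (Ioo 0 u) ⊆
      regionBetween h (fun _ => u) (Ioo 0 v) := by
    rintro ⟨y, x⟩ ⟨hx, hy0, hyx⟩
    have hyv : y < v := hyx.trans_le (Xinv_le_of_le_rm hh hv (hx.2.le.trans hrm))
    exact ⟨⟨hy0, hyv⟩, lt_of_lt_Xinv ⟨hy0.le, hyv.le.trans hv.2⟩ hyx, hx.2⟩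
  have hvol := (((Measure.measurePreserving_swap (μ := volume) (ν := volume)).measure_preimage
    (measurableSet_regionBetween measurable_const Xinv_mono.measurable
      measurableSet_Ioo).nullMeasurableSet).symm.trans_le (measure_mono hsub))
  rw [volume_regionBetween_eq_integral (integrableOn_const measure_Ioo_lt_top.ne) hXinv
      measurableSet_Ioo fun _ _ => Xinv_nonneg,
    volume_regionBetween_eq_integral hint hconst measurableSet_Ioo hbelow] at hvol
  simp only [Pi.sub_apply, sub_zero] at hvol
  rw [ENNReal.ofReal_le_ofReal_iff
      (setIntegral_nonneg measurableSet_Ioo fun y hy => sub_nonneg.2 (hbelow y hy)),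
    integral_sub hconst hint, setIntegral_const,
    Real.volume_real_Ioo_of_le hv.1, smul_eq_mul] at hvol
  rw [intervalIntegral.integral_of_le hu.1, intervalIntegral.integral_of_le hv.1,
    integral_Ioc_eq_integral_Ioo, integral_Ioc_eq_integral_Ioo]
  linarith

section Potential

variable {hf hg : ℝ → ℝ} {u v : ℝ}

lemma Pot_nonpos_of_isCrossing (hhg : MemX hg) (hc : IsCrossing hf hg u v)
    (hle : ∀ y ∈ Ioo (0:ℝ) v, Xinv hf y ≤ hg y) : Pot hf hg u v ≤ 0 := by
  obtain ⟨hu, hv, hcg, -⟩ := hc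
  have hyoung := integral_Xinv_add_integral_le_mul hhg hu hv hcg.1 hcg.2
  have hcmp : ∫ y in (0:ℝ)..v, Xinv hf y ≤ ∫ y in (0:ℝ)..v, hg y :=
    intervalIntegral.integral_mono_on_of_le_Ioo hv.1 Xinv_mono.intervalIntegrable
      (hhg.intervalIntegrable hv) hle
  unfold Pot
  linarith

lemma StrictPosGap.pot_pos (hgap : StrictPosGap hf hg) (hc : IsCrossing hf hg u v)
    (h0 : ¬(u = 0 ∧ v = 0)) (h1 : ¬(u = 1 ∧ v = 1)) : 0 < Pot hf hg u v :=
  (le_max_left _ _).trans_lt (hgap.2 u v hc h0 h1)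

end Potential

lemma exists_maximal_forall_mem_Ioo {P : ℝ → Prop} {a : ℝ} (ha : a ≤ 1)
    (hP : ∀ y ∈ Ioo 0 a, P y) :
    ∃ s ∈ Icc a 1, (∀ y ∈ Ioo 0 s, P y) ∧ ∀ w ∈ Ioc s 1, ∃ y ∈ Ico s w, ¬P y := by
  set V := {w ∈ Icc a 1 | ∀ y ∈ Ioo 0 w, P y}
  have hV : BddAbove V := ⟨1, fun w hw => hw.1.2⟩
  have haV : a ∈ V := ⟨⟨le_rfl, ha⟩, hP⟩
  have hbelow : ∀ y ∈ Ioo 0 (sSup V), P y := fun y hy => by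
    obtain ⟨w, hw, hyw⟩ := exists_lt_of_lt_csSup ⟨a, haV⟩ hy.2
    exact hw.2 y ⟨hy.1, hyw⟩
  refine ⟨sSup V, ⟨le_csSup hV haV, csSup_le ⟨a, haV⟩ fun w hw => hw.1.2⟩, hbelow,
    fun w hw => ?_⟩
  by_contra! H
  refine hw.1.not_ge (le_csSup hV ⟨⟨(le_csSup hV haV).trans hw.1.le, hw.2⟩, fun y hy => ?_⟩)
  rcases lt_or_ge y (sSup V) with hys | hys
  · exact hbelow y ⟨hy.1, hys⟩
  · exact H y ⟨hys, hy.2⟩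

theorem isCrossing_lm_of_maximal {hf hg : ℝ → ℝ} {v : ℝ} (hhf : MemX hf) (hhg : MemX hg)
    (hv : v ∈ Ioo (0:ℝ) 1) (hle : ∀ y ∈ Ioo (0:ℝ) v, Xinv hf y ≤ hg y)
    (hlt : ∀ w ∈ Ioc v 1, ∃ y ∈ Ico v w, ¬Xinv hf y ≤ hg y) :
    IsCrossing hf hg (lm hg v) v := by
  have hv' : v ∈ Icc (0:ℝ) 1 := Ioo_subset_Icc_self hv
  refine ⟨⟨lm_nonneg hhg hv'.2, lm_le_one hhg hv'.2⟩, hv', ⟨le_rfl, lm_le_rm hhg hv'⟩,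
    lm_le_of_forall_le hv'.1 fun t ht => le_of_not_gt fun hvt => ?_,
    le_rm_of_forall_Xinv_le hhf (lm_nonneg hhg hv'.2) hv'.2 fun y hy =>
      (hle y hy).trans (le_lm hhg hv'.2 ⟨hy.1.le, hy.2⟩)⟩
  -- otherwise `hg y < Xinv hf y ≤ t < hg y'` for some `y' < v ≤ y`
  have ht1 : t ∈ Icc (0:ℝ) 1 := ⟨ht.1, ht.2.le.trans (lm_le_one hhg hv'.2)⟩
  obtain ⟨y, hy, hgy⟩ := hlt (hf t) ⟨hvt, (hhf.2 ht1).2⟩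
  obtain ⟨y', hy', hty'⟩ := exists_lt_of_lt_lm hv.1 ht.2
  have hmono : hg y' ≤ hg y := hhg.1 ⟨hy'.1, hy'.2.le.trans hv'.2⟩
    ⟨hv.1.le.trans hy.1, hy.2.le.trans (hhf.2 ht1).2⟩ (hy'.2.le.trans hy.1)
  have hXinv : Xinv hf y ≤ t := Xinv_le ht1 hy.2.le
  exact hgy (by linarith)

theorem StrictPosGap.rm_zero {hf hg : ℝ → ℝ} (hhf : MemX hf) (hhg : MemX hg)
    (hgap : StrictPosGap hf hg) : rm hf 0 = 0 := by
  have ha1 : rm hf 0 ≤ 1 :=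
    (rm_le hhf le_rfl ⟨one_pos, le_rfl⟩).trans (hhf.2 ⟨zero_le_one, le_rfl⟩).2
  refine le_antisymm (le_of_not_gt fun ha => ?_) (rm_nonneg hhf le_rfl)
  have hXinv : ∀ y ∈ Ioo 0 (rm hf 0), Xinv hf y ≤ 0 := fun y hy =>
    Xinv_le_of_le_rm hhf ⟨le_rfl, zero_le_one⟩ hy.2.le
  obtain ⟨s, hs, hle, hlt⟩ := exists_maximal_forall_mem_Ioo (P := fun y => Xinv hf y ≤ hg y) ha1
    fun y hy => (hXinv y hy).trans (hhg.2 ⟨hy.1.le, hy.2.le.trans ha1⟩).1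
  rcases hs.2.eq_or_lt with rfl | hs1
  · obtain ⟨u, v, hc, h0, h1⟩ := hgap.1
    exact (hgap.pot_pos hc h0 h1).not_ge
      (Pot_nonpos_of_isCrossing hhg hc fun y hy => hle y ⟨hy.1, hy.2.trans_le hc.2.1.2⟩)
  · have hs0 : 0 < s := ha.trans_le hs.1
    have hc := isCrossing_lm_of_maximal hhf hhg ⟨hs0, hs1⟩ hle hlt
    exact (hgap.pot_pos hc (fun h => hs0.ne' h.2) (fun h => hs1.ne h.2)).not_ge
      (Pot_nonpos_of_isCrossing hhg hc hle)

section Swap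

variable {hf hg : ℝ → ℝ} {u v : ℝ}

lemma Pot_swap : Pot hg hf v u = Pot hf hg u v := by
  unfold Pot
  ring

lemma isCrossing_swap : IsCrossing hg hf v u ↔ IsCrossing hf hg u v := by
  unfold IsCrossing
  tauto

theorem StrictPosGap.swap (hgap : StrictPosGap hf hg) : StrictPosGap hg hf := by
  obtain ⟨⟨u, v, hc, h0, h1⟩, hall⟩ := hgap
  refine ⟨⟨v, u, isCrossing_swap.2 hc, by tauto, by tauto⟩, fun v' u' hc' h0' h1' => ?_⟩
  rw [Agap, Pot_swap, ← Agap, Pot_swap]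
  exact hall u' v' (isCrossing_swap.1 hc') (by tauto) (by tauto)

end Swap

lemma sSup_one_sub_image {S : Set ℝ} (hne : S.Nonempty) (hS : BddBelow S) :
    sSup ((fun x => 1 - x) '' S) = 1 - sInf S :=
  (Antitone.map_csInf_of_continuousAt (by fun_prop) (fun _ _ hab => sub_le_sub_left hab 1)
    hne hS).symm

lemma sInf_one_sub_image {S : Set ℝ} (hne : S.Nonempty) (hS : BddAbove S) :
    sInf ((fun x => 1 - x) '' S) = 1 - sSup S :=
  (Antitone.map_csSup_of_continuousAt (by fun_prop) (fun _ _ hab => sub_le_sub_left hab 1)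
    hne hS).symm

def reflect (h : ℝ → ℝ) (x : ℝ) : ℝ := 1 - h (1 - x)

/-- `reflect` turns the smallest generalized inverse `Xinv` into the largest one. -/
def XinvSup (h : ℝ → ℝ) (v : ℝ) : ℝ := sSup ({0} ∪ {u ∈ Icc (0:ℝ) 1 | h u ≤ v})

section Reflect

variable {h : ℝ → ℝ} {v w : ℝ}

lemma reflect_reflect (h : ℝ → ℝ) : reflect (reflect h) = h := by
  funext x
  simp only [reflect, sub_sub_cancel]

lemma MemX.reflect (hh : MemX h) : MemX (reflect h) := by
  have hflip : ∀ x ∈ Icc (0:ℝ) 1, 1 - x ∈ Icc (0:ℝ) 1 := fun _ => Icc.mem_iff_one_sub_mem.1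
  refine ⟨fun x hx y hy hxy => ?_, fun x hx => hflip _ (hh.2 (hflip x hx))⟩
  exact sub_le_sub_left (hh.1 (hflip y hy) (hflip x hx) (sub_le_sub_left hxy 1)) 1

lemma bddAbove_XinvSup_set : BddAbove ({0} ∪ {u ∈ Icc (0:ℝ) 1 | h u ≤ v}) :=
  ⟨1, by rintro x (rfl | hx); exacts [zero_le_one, hx.1.2]⟩

lemma lm_reflect (hh : MemX h) (hw : w ∈ Icc (0:ℝ) 1) : lm (reflect h) w = 1 - rm h (1 - w) := by
  rcases le_or_gt w 0 with hw0 | hw0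
  · rw [lm, if_pos hw0, rm, if_pos (by linarith), sub_self]
  have himage : reflect h '' Ico 0 w = (fun x => 1 - x) '' (h '' Ioc (1 - w) 1) := by
    rw [show reflect h = (fun x => 1 - x) ∘ h ∘ (fun x => 1 - x) from rfl, image_comp, image_comp,
      image_const_sub_Ico, sub_zero]
  have hbdd : BddBelow (h '' Ioc (1 - w) 1) :=
    ⟨0, forall_mem_image.2 fun y hy => (hh.2 ⟨(sub_nonneg.2 hw.2).trans hy.1.le, hy.2⟩).1⟩
  rw [lm, if_neg hw0.not_ge, rm, if_neg (by linarith), himage,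
    sSup_one_sub_image ((nonempty_Ioc.2 (by linarith)).image h) hbdd]

lemma rm_reflect (hh : MemX h) (hw : w ∈ Icc (0:ℝ) 1) : rm (reflect h) w = 1 - lm h (1 - w) := by
  have := lm_reflect hh.reflect (Icc.mem_iff_one_sub_mem.1 hw)
  rw [reflect_reflect, sub_sub_cancel] at this
  linarith

lemma IsCrossing.reflect {hf hg : ℝ → ℝ} {u v : ℝ} (hhf : MemX hf) (hhg : MemX hg)
    (hc : IsCrossing hf hg u v) : IsCrossing (reflect hf) (reflect hg) (1 - u) (1 - v) := by
  obtain ⟨hu, hv, hcg, hcf⟩ := hc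
  have h1u : 1 - u ∈ Icc (0:ℝ) 1 := Icc.mem_iff_one_sub_mem.1 hu
  have h1v : 1 - v ∈ Icc (0:ℝ) 1 := Icc.mem_iff_one_sub_mem.1 hv
  refine ⟨h1u, h1v, ?_, ?_⟩
  · rw [lm_reflect hhg h1v, rm_reflect hhg h1v, sub_sub_cancel]
    exact ⟨sub_le_sub_left hcg.2 1, sub_le_sub_left hcg.1 1⟩
  · rw [lm_reflect hhf h1u, rm_reflect hhf h1u, sub_sub_cancel]
    exact ⟨sub_le_sub_left hcf.2 1, sub_le_sub_left hcf.1 1⟩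

lemma Xinv_reflect (h : ℝ → ℝ) (x : ℝ) : Xinv (reflect h) x = 1 - XinvSup h (1 - x) := by
  have hset : {1} ∪ {w ∈ Icc (0:ℝ) 1 | x ≤ reflect h w} =
      (fun z => 1 - z) '' ({0} ∪ {z ∈ Icc (0:ℝ) 1 | h z ≤ 1 - x}) := by
    rw [(show Function.Involutive fun z : ℝ => 1 - z from sub_sub_cancel 1).image_eq_preimage_symm]
    ext w
    simp only [reflect, mem_union, mem_singleton_iff, mem_ofPred_eq, mem_preimage, mem_Icc,
      sub_eq_zero, sub_nonneg, sub_le_self_iff]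
    constructor <;> rintro (hw | ⟨⟨hw0, hw1⟩, hwx⟩)
    all_goals first | (left; linarith) | (right; exact ⟨⟨by linarith, by linarith⟩, by linarith⟩)
  rw [Xinv, hset, sInf_one_sub_image (singleton_nonempty _).inl bddAbove_XinvSup_set, XinvSup]

lemma XinvSup_mono : Monotone (XinvSup h) := fun _ _ hab =>
  csSup_le_csSup bddAbove_XinvSup_set (singleton_nonempty _).inl <|
    union_subset_union_right _ fun _ hu => ⟨hu.1, hu.2.trans hab⟩

lemma Xinv_le_XinvSup : Xinv h v ≤ XinvSup h v := by
  refine le_of_forall_gt_imp_ge_of_dense fun c hc => ?_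
  rcases le_or_gt 1 c with hc1 | hc1
  · exact Xinv_le_one.trans hc1
  have hc0 : 0 ≤ c := (le_csSup bddAbove_XinvSup_set (Or.inl rfl)).trans hc.le
  exact Xinv_le ⟨hc0, hc1.le⟩ <| not_lt.1 fun hcv =>
    hc.not_ge (le_csSup bddAbove_XinvSup_set (Or.inr ⟨⟨hc0, hc1.le⟩, hcv.le⟩))

lemma XinvSup_le_Xinv_of_lt (hh : MemX h) {y₁ y₂ : ℝ} (hy : y₁ < y₂) :
    XinvSup h y₁ ≤ Xinv h y₂ := by
  refine csSup_le (singleton_nonempty _).inl ?_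
  rintro b (rfl | hb)
  · exact Xinv_nonneg
  refine le_csInf (singleton_nonempty _).inl ?_
  rintro a (rfl | ha)
  · exact hb.1.2
  · exact le_of_not_gt fun hab => hy.not_ge (ha.2.trans ((hh.1 ha.1 hb.1 hab.le).trans hb.2))

lemma integral_XinvSup (hh : MemX h) (a b : ℝ) :
    ∫ x in a..b, XinvSup h x = ∫ x in a..b, Xinv h x := by
  refine intervalIntegral.integral_congr_ae ?_
  -- the two inverses agree wherever the monotone function `Xinv h` is continuous
  filter_upwards [(Xinv_mono (h := h)).countable_not_continuousAt.ae_notMem volume] with y hy _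
  rw [not_not] at hy
  refine le_antisymm (ge_of_tendsto (hy.tendsto.mono_left (nhdsWithin_le_nhds (s := Ioi y))) ?_)
    Xinv_le_XinvSup
  exact eventually_nhdsWithin_of_forall fun z hz => XinvSup_le_Xinv_of_lt hh hz

lemma integral_Xinv_reflect (hh : MemX h) (w : ℝ) :
    ∫ x in (0:ℝ)..(1 - w), Xinv (reflect h) x =
      (1 - w) - ((∫ x in (0:ℝ)..1, Xinv h x) - ∫ x in (0:ℝ)..w, Xinv h x) := by
  simp_rw [Xinv_reflect]
  rw [intervalIntegral.integral_comp_sub_left (fun z => 1 - XinvSup h z), sub_sub_cancel, sub_zero,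
    intervalIntegral.integral_sub intervalIntegrable_const XinvSup_mono.intervalIntegrable,
    integral_XinvSup hh, intervalIntegral.integral_interval_sub_left
      Xinv_mono.intervalIntegrable Xinv_mono.intervalIntegrable,
    intervalIntegral.integral_const, smul_eq_mul, mul_one]

end Reflect

section ReflectGap

variable {hf hg : ℝ → ℝ}

lemma Pot_reflect (hhf : MemX hf) (hhg : MemX hg) (u v : ℝ) :
    Pot (reflect hf) (reflect hg) (1 - u) (1 - v) = Pot hf hg u v - Agap hf hg := by
  simp only [Agap, Pot, integral_Xinv_reflect hhf, integral_Xinv_reflect hhg]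
  ring

lemma Agap_reflect (hhf : MemX hf) (hhg : MemX hg) :
    Agap (reflect hf) (reflect hg) = -Agap hf hg := by
  simpa [Agap, Pot] using Pot_reflect hhf hhg 0 0

theorem StrictPosGap.reflect (hhf : MemX hf) (hhg : MemX hg) (hgap : StrictPosGap hf hg) :
    StrictPosGap (reflect hf) (reflect hg) := by
  obtain ⟨⟨u, v, hc, h0, h1⟩, hall⟩ := hgap
  refine ⟨⟨1 - u, 1 - v, hc.reflect hhf hhg, fun h => h1 ⟨by linarith [h.1], by linarith [h.2]⟩,
    fun h => h0 ⟨by linarith [h.1], by linarith [h.2]⟩⟩, fun p q hc' h0' h1' => ?_⟩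
  have hc'' := hc'.reflect hhf.reflect hhg.reflect
  rw [reflect_reflect, reflect_reflect] at hc''
  have hgt := hall _ _ hc'' (fun h => h1' ⟨by linarith [h.1], by linarith [h.2]⟩)
    (fun h => h0' ⟨by linarith [h.1], by linarith [h.2]⟩)
  rw [Agap_reflect hhf hhg, ← sub_sub_cancel 1 p, ← sub_sub_cancel 1 q, Pot_reflect hhf hhg]
  exact max_lt (by linarith [le_max_right 0 (Agap hf hg)])
    (by linarith [le_max_left 0 (Agap hf hg)])

end ReflectGap

/-- **Continuity at the endpoints under the strictly positive gap condition.** -/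
theorem endpoint_continuity_of_strictPosGap
    (hf hg : ℝ → ℝ) (hhf : MemX hf) (hhg : MemX hg)
    (hgap : StrictPosGap hf hg) :
    rm hf 0 = 0 ∧ rm hg 0 = 0 ∧ lm hf 1 = 1 ∧ lm hg 1 = 1 := by
  have lm_one : ∀ {h : ℝ → ℝ}, MemX h → rm (reflect h) 0 = 0 → lm h 1 = 1 := fun hh h0 => by
    rw [rm_reflect hh ⟨le_rfl, zero_le_one⟩, sub_zero] at h0
    linarith
  have hrefl := hgap.reflect hhf hhg
  exact ⟨hgap.rm_zero hhf hhg, hgap.swap.rm_zero hhg hhf,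
    lm_one hhf (hrefl.rm_zero hhf.reflect hhg.reflect),
    lm_one hhg (hrefl.swap.rm_zero hhg.reflect hhf.reflect)⟩
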